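/- arXiv:2111.13761 — 4 statements merged into one kernel-verified Lean document; each statement's English description precedes it below -/
import Mathlib

section
/- For the cubulation map f sending each triangle of the regular triangular tiling of the plane to its hyperplane coordinates (v1, v2, v3), two triangles that share an edge are mapped to vertices of the integer lattice Z^3 that differ in exactly one coordinate, and in that coordinate by exactly 1. -/
noncomputable def lineF : Fin 3 → ℝ × ℝ → ℝ := fun i p =>
  if i = 0 then p.2 - 1/3
  else if i = 1 then (Real.sqrt 3 * p.1 - p.2) / 2 - 1/3
  else -(Real.sqrt 3 * p.1 + p.2) / 2 - 1/3

def triRegion (v : Fin 3 → ℤ) : Set (ℝ × ℝ) :=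
  {p | ∀ i : Fin 3, ((v i : ℝ) - 1 ≤ lineF i p ∧ lineF i p ≤ (v i : ℝ))}

def IsTile (v : Fin 3 → ℤ) : Prop := (interior (triRegion v)).Nonempty

abbrev Tile : Type := {v : Fin 3 → ℤ // IsTile v}

def Tile.region (T : Tile) : Set (ℝ × ℝ) := triRegion T.val

def EdgeAdj (T U : Tile) : Prop := T ≠ U ∧ ¬ (T.region ∩ U.region).Subsingleton

def VertexAdj (T U : Tile) : Prop := T ≠ U ∧ (T.region ∩ U.region).Nonempty

def sumv (v : Fin 3 → ℤ) : ℤ := v 0 + v 1 + v 2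

def dualGraph : SimpleGraph Tile where
  Adj := EdgeAdj
  symm := ⟨fun T U h => ⟨h.1.symm, fun hs => h.2 (by rwa [Set.inter_comm] at hs)⟩⟩
  loopless := ⟨fun T h => h.1 rfl⟩


/-!
The region of a tile is the intersection of three strips `v i - 1 ≤ lineF i ≤ v i` of width one.
Two strips of the same family with distinct integer indices overlap only if the indices differ
by one, and then only along their common boundary line `lineF i = min (v i) (w i)`. Two tiles
differing in two coordinates therefore meet inside the intersection of two non-parallel lines,
which is at most a point.
-/

section IntegerStrips

variable {a b : ℤ} {x : ℝ}

lemma abs_sub_le_one_of_mem_Icc_sub_one (ha : x ∈ Set.Icc ((a : ℝ) - 1) a)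
    (hb : x ∈ Set.Icc ((b : ℝ) - 1) b) : |a - b| ≤ 1 := by
  have hab : (a : ℝ) - 1 ≤ b := ha.1.trans hb.2
  have hba : (b : ℝ) - 1 ≤ a := hb.1.trans ha.2
  norm_cast at hab hba
  rw [abs_le]
  omega

lemma eq_min_of_mem_Icc_sub_one (hab : a ≠ b) (ha : x ∈ Set.Icc ((a : ℝ) - 1) a)
    (hb : x ∈ Set.Icc ((b : ℝ) - 1) b) : x = min (a : ℝ) b := by
  have h := abs_le.mp (abs_sub_le_one_of_mem_Icc_sub_one ha hb)
  rcases hab.lt_or_gt with hlt | hlt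
  · have hb' : (b : ℝ) = a + 1 := by exact_mod_cast (show b = a + 1 by omega)
    rw [min_eq_left (by exact_mod_cast hlt.le)]
    linarith [ha.2, hb.1]
  · have ha' : (a : ℝ) = b + 1 := by exact_mod_cast (show a = b + 1 by omega)
    rw [min_eq_right (by exact_mod_cast hlt.le)]
    linarith [hb.2, ha.1]

end IntegerStrips

@[simp] lemma lineF_zero (p : ℝ × ℝ) : lineF 0 p = p.2 - 1/3 := by simp [lineF]

@[simp] lemma lineF_one (p : ℝ × ℝ) : lineF 1 p = (Real.sqrt 3 * p.1 - p.2) / 2 - 1/3 := by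
  simp [lineF]

@[simp] lemma lineF_two (p : ℝ × ℝ) : lineF 2 p = -(Real.sqrt 3 * p.1 + p.2) / 2 - 1/3 := by
  simp [lineF]

lemma lineF_zero_add_lineF_one_add_lineF_two (p : ℝ × ℝ) :
    lineF 0 p + lineF 1 p + lineF 2 p = -1 := by
  simp only [lineF_zero, lineF_one, lineF_two]; ring

lemma eq_of_lineF_zero_eq_of_lineF_one_eq {p q : ℝ × ℝ} (h0 : lineF 0 p = lineF 0 q)
    (h1 : lineF 1 p = lineF 1 q) : p = q := by
  simp only [lineF_zero, lineF_one] at h0 h1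
  have hx : Real.sqrt 3 * p.1 = Real.sqrt 3 * q.1 := by linarith
  exact Prod.ext (mul_left_cancel₀ (by positivity) hx) (by linarith)

lemma eq_of_lineF_eq_of_lineF_eq {i j : Fin 3} (hij : i ≠ j) {p q : ℝ × ℝ}
    (hi : lineF i p = lineF i q) (hj : lineF j p = lineF j q) : p = q := by
  have hp := lineF_zero_add_lineF_one_add_lineF_two p
  have hq := lineF_zero_add_lineF_one_add_lineF_two q
  have h01 : lineF 0 p = lineF 0 q ∧ lineF 1 p = lineF 1 q := by
    fin_cases i <;> fin_cases j <;> simp_all <;> linarith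
  exact eq_of_lineF_zero_eq_of_lineF_one_eq h01.1 h01.2

lemma lineF_eq_min_of_mem_triRegion_inter {v w : Fin 3 → ℤ} {i : Fin 3} (hvw : v i ≠ w i)
    {p : ℝ × ℝ} (hp : p ∈ triRegion v ∩ triRegion w) :
    lineF i p = min (v i : ℝ) (w i) :=
  eq_min_of_mem_Icc_sub_one hvw (hp.1 i) (hp.2 i)

lemma triRegion_inter_subsingleton {v w : Fin 3 → ℤ} {i j : Fin 3} (hij : i ≠ j)
    (hi : v i ≠ w i) (hj : v j ≠ w j) : (triRegion v ∩ triRegion w).Subsingleton :=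
  fun _ hp _ hq => eq_of_lineF_eq_of_lineF_eq hij
    ((lineF_eq_min_of_mem_triRegion_inter hi hp).trans
      (lineF_eq_min_of_mem_triRegion_inter hi hq).symm)
    ((lineF_eq_min_of_mem_triRegion_inter hj hp).trans
      (lineF_eq_min_of_mem_triRegion_inter hj hq).symm)

theorem cubulation_preserves_adjacency (T U : Tile) (h : EdgeAdj T U) :
    ∃ i : Fin 3, |T.val i - U.val i| = 1 ∧ ∀ j : Fin 3, j ≠ i → T.val j = U.val j := by
  obtain ⟨hTU, hmeet⟩ := h
  obtain ⟨i, hi⟩ : ∃ i, T.val i ≠ U.val i :=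
    Function.ne_iff.mp fun e => hTU (Subtype.ext e)
  obtain ⟨p, hp⟩ := (Set.not_subsingleton_iff.mp hmeet).nonempty
  refine ⟨i, ?_, fun j hji => ?_⟩
  · have hle := abs_sub_le_one_of_mem_Icc_sub_one (hp.1 i) (hp.2 i)
    have hpos : 0 < |T.val i - U.val i| := abs_pos.mpr (sub_ne_zero.mpr hi)
    omega
  · by_contra hj
    exact hmeet (triRegion_inter_subsingleton hji hj hi)
end

section
/- If two triangles of the regular triangular tiling share a vertex (not necessarily an edge), then their cubulation images in Z^3 differ by at most 1 in every coordinate. -/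
theorem Int.abs_sub_le_one_of_unit_intervals_meet {α : Type*} [Ring α] [LinearOrder α]
    [IsStrictOrderedRing α] {a b : ℤ} {x : α}
    (ha : (a : α) - 1 ≤ x ∧ x ≤ a) (hb : (b : α) - 1 ≤ x ∧ x ≤ b) : |a - b| ≤ 1 := by
  have hab : a ≤ b + 1 := by exact_mod_cast sub_le_iff_le_add.1 (ha.1.trans hb.2)
  have hba : b ≤ a + 1 := by exact_mod_cast sub_le_iff_le_add.1 (hb.1.trans ha.2)
  exact abs_le.2 ⟨by linarith, by linarith⟩

theorem abs_sub_le_one_of_mem_triRegion {v w : Fin 3 → ℤ} {p : ℝ × ℝ}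
    (hv : p ∈ triRegion v) (hw : p ∈ triRegion w) (i : Fin 3) : |v i - w i| ≤ 1 :=
  Int.abs_sub_le_one_of_unit_intervals_meet (hv i) (hw i)

theorem vertex_sharing_coords_close (T U : Tile)
    (h : (T.region ∩ U.region).Nonempty) :
    ∀ i : Fin 3, |T.val i - U.val i| ≤ 1 := by
  obtain ⟨p, hT, hU⟩ := h
  exact abs_sub_le_one_of_mem_triRegion hT hU
end

section
/- In the regular triangular tiling, two triangles in a set A are vertex-connected through A (joined by a chain of triangles in A where consecutive triangles share at least a vertex) if and only if their cubulation images can be joined by a chain of images of triangles in A where consecutive images differ by at most 1 in each of the three coordinates (26-connectivity on Z^3). -/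
/-!
The three functions `lineF i` are barycentric-type coordinates on the plane: they sum to `-1`,
and `p ↦ (lineF i p)ᵢ` is an affine bijection onto the plane `∑ tᵢ = -1` in `ℝ³`. A tile `v` is
the preimage of the box `∏ [vᵢ - 1, vᵢ]`, which meets that plane in a nondegenerate triangle
exactly when `∑ vᵢ ∈ {0, 1}`. Two tile regions meet iff the intersection box
`∏ [max vᵢ wᵢ - 1, min vᵢ wᵢ]` meets the plane; for `|vᵢ - wᵢ| ≤ 1` and `∑ vᵢ, ∑ wᵢ ∈ {0, 1}`
the sums of its corners bracket `-1`, so the intermediate value theorem gives a common point.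
-/

open Set Topology

theorem Set.Subsingleton.interior_eq_empty {X : Type*} [TopologicalSpace X]
    [∀ x : X, (𝓝[≠] x).NeBot] {s : Set X} (hs : s.Subsingleton) : interior s = ∅ := by
  rcases hs.eq_empty_or_singleton with rfl | ⟨x, rfl⟩
  · exact interior_empty
  · exact interior_singleton x

theorem exists_mem_Icc_sum_eq {ι : Type*} [Fintype ι] {a b : ι → ℝ} (hab : a ≤ b) {c : ℝ}
    (hc : c ∈ Icc (∑ i, a i) (∑ i, b i)) : ∃ t ∈ Icc a b, ∑ i, t i = c :=
  (convex_Icc a b).isPreconnected.intermediate_value (left_mem_Icc.2 hab) (right_mem_Icc.2 hab)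
    (by fun_prop) hc

theorem lineF_sum (p : ℝ × ℝ) : ∑ i, lineF i p = -1 := by
  simp [Fin.sum_univ_three, lineF]
  ring

theorem lineF_injective : Function.Injective fun p i => lineF i p := by
  intro p q h
  have h0 := congrFun h 0
  have h1 := congrFun h 1
  simp only [lineF] at h0 h1
  norm_num at h0 h1
  have hy : p.2 = q.2 := by linarith
  have hx : p.1 = q.1 :=
    mul_left_cancel₀ (by positivity : Real.sqrt 3 ≠ 0) (by linarith)
  exact Prod.ext hx hy

theorem exists_lineF_eq {t : Fin 3 → ℝ} (ht : ∑ i, t i = -1) : ∃ p, ∀ i, lineF i p = t i := by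
  rw [Fin.sum_univ_three] at ht
  have hmul : Real.sqrt 3 * ((2 * t 1 + t 0 + 1) / Real.sqrt 3) = 2 * t 1 + t 0 + 1 :=
    mul_div_cancel₀ _ (by positivity)
  refine ⟨((2 * t 1 + t 0 + 1) / Real.sqrt 3, t 0 + 1 / 3), fun i => ?_⟩
  fin_cases i <;> simp [lineF, hmul] <;> linarith

theorem sumv_eq_sum (v : Fin 3 → ℤ) : sumv v = ∑ i, v i := by
  rw [sumv, Fin.sum_univ_three]

theorem triRegion_subsingleton {v : Fin 3 → ℤ} (h : sumv v = -1 ∨ sumv v = 2) :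
    (triRegion v).Subsingleton := by
  suffices ∃ c : Fin 3 → ℝ, ∀ p ∈ triRegion v, ∀ i, lineF i p = c i by
    obtain ⟨c, hc⟩ := this
    exact fun p hp q hq => lineF_injective (funext fun i => (hc p hp i).trans (hc q hq i).symm)
  rw [sumv_eq_sum] at h
  -- the box constraint on one side is then tight in every coordinate
  rcases h with h | h
  · refine ⟨fun i => v i, fun p hp => ?_⟩
    have hsum : ∑ i, lineF i p = ∑ i, (v i : ℝ) := by rw [lineF_sum]; exact_mod_cast h.symm
    simpa using (Finset.sum_eq_sum_iff_of_le fun i _ => (hp i).2).1 hsum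
  · refine ⟨fun i => v i - 1, fun p hp => ?_⟩
    have hv : ∑ i, (v i : ℝ) = 2 := by exact_mod_cast h
    have hsum : ∑ i, ((v i : ℝ) - 1) = ∑ i, lineF i p := by
      rw [lineF_sum, Finset.sum_sub_distrib, hv]
      norm_num
    simpa [eq_comm] using (Finset.sum_eq_sum_iff_of_le fun i _ => (hp i).1).1 hsum

theorem IsTile.sumv_eq_zero_or_one {v : Fin 3 → ℤ} (hv : IsTile v) :
    sumv v = 0 ∨ sumv v = 1 := by
  obtain ⟨p, hp⟩ := hv
  have hreg : p ∈ triRegion v := interior_subset hp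
  have hsum := lineF_sum p
  rw [Fin.sum_univ_three] at hsum
  have hlo : (-1 : ℝ) ≤ sumv v := by
    push_cast [sumv]; linarith [(hreg 0).2, (hreg 1).2, (hreg 2).2]
  have hhi : (sumv v : ℝ) ≤ 2 := by
    push_cast [sumv]; linarith [(hreg 0).1, (hreg 1).1, (hreg 2).1]
  have hdeg : ¬ (sumv v = -1 ∨ sumv v = 2) := fun h => by
    simp [(triRegion_subsingleton h).interior_eq_empty] at hp
  have : -1 ≤ sumv v := by exact_mod_cast hlo
  have : sumv v ≤ 2 := by exact_mod_cast hhi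
  omega

theorem triRegion_inter_nonempty_iff {v w : Fin 3 → ℤ} (hv : IsTile v) (hw : IsTile w) :
    (triRegion v ∩ triRegion w).Nonempty ↔ ∀ i, |v i - w i| ≤ 1 := by
  constructor
  · rintro ⟨p, hpv, hpw⟩ i
    have : |(v i : ℝ) - w i| ≤ 1 :=
      abs_sub_le_iff.2 ⟨by linarith [(hpv i).1, (hpw i).2], by linarith [(hpv i).2, (hpw i).1]⟩
    exact_mod_cast this
  · intro hvw
    have hv01 := hv.sumv_eq_zero_or_one
    have hw01 := hw.sumv_eq_zero_or_one
    have h0 := abs_le.1 (hvw 0)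
    have h1 := abs_le.1 (hvw 1)
    have h2 := abs_le.1 (hvw 2)
    set a : Fin 3 → ℤ := fun i => max (v i) (w i) - 1
    set b : Fin 3 → ℤ := fun i => min (v i) (w i)
    have hab : (fun i => (a i : ℝ)) ≤ fun i => (b i : ℝ) := fun i => by
      have := abs_le.1 (hvw i)
      have : a i ≤ b i := by simp only [a, b]; omega
      show (a i : ℝ) ≤ b i
      exact_mod_cast this
    have hsum_a : ∑ i, a i ≤ -1 := by
      simp only [a, sumv, Fin.sum_univ_three] at *
      omega
    have hsum_b : -1 ≤ ∑ i, b i := by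
      simp only [b, sumv, Fin.sum_univ_three] at *
      omega
    obtain ⟨t, ⟨hat, htb⟩, ht⟩ := exists_mem_Icc_sum_eq hab (c := -1)
      ⟨by exact_mod_cast hsum_a, by exact_mod_cast hsum_b⟩
    obtain ⟨p, hp⟩ := exists_lineF_eq ht
    have hat' : ∀ i, (max (v i) (w i) : ℝ) - 1 ≤ lineF i p := fun i => by
      rw [hp]; exact_mod_cast hat i
    have htb' : ∀ i, lineF i p ≤ min (v i : ℝ) (w i) := fun i => by
      rw [hp]; exact_mod_cast htb i
    refine ⟨p, fun i => ⟨?_, ?_⟩, fun i => ⟨?_, ?_⟩⟩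
    · linarith [hat' i, le_max_left (v i : ℝ) (w i)]
    · linarith [htb' i, min_le_left (v i : ℝ) (w i)]
    · linarith [hat' i, le_max_right (v i : ℝ) (w i)]
    · linarith [htb' i, min_le_right (v i : ℝ) (w i)]

theorem vertexAdj_iff (T U : Tile) :
    VertexAdj T U ↔ T.val ≠ U.val ∧ ∀ i, |T.val i - U.val i| ≤ 1 := by
  rw [VertexAdj, Tile.region, Tile.region, triRegion_inter_nonempty_iff T.2 U.2,
    Subtype.val_injective.ne_iff]

theorem vertex_connectivity_iff_26_connectivity_general (A : Set Tile) (T U : Tile) :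
    Relation.ReflTransGen (fun x y : Tile => x ∈ A ∧ y ∈ A ∧ VertexAdj x y) T U ↔
    Relation.ReflTransGen (fun x y : Tile => x ∈ A ∧ y ∈ A ∧
      x.val ≠ y.val ∧ ∀ i : Fin 3, |x.val i - y.val i| ≤ 1) T U := by
  simp only [vertexAdj_iff]

theorem vertex_connectivity_iff_26_connectivity (A : Set Tile) (T U : Tile)
    (hT : T ∈ A) (hU : U ∈ A) :
    Relation.ReflTransGen (fun x y : Tile => x ∈ A ∧ y ∈ A ∧ VertexAdj x y) T U ↔
    Relation.ReflTransGen (fun x y : Tile => x ∈ A ∧ y ∈ A ∧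
      x.val ≠ y.val ∧ ∀ i : Fin 3, |x.val i - y.val i| ≤ 1) T U :=
  vertex_connectivity_iff_26_connectivity_general A T U
end

section
/- In the graph on {(x,y,z) ∈ Z^3 : x+y+z ∈ {0,1}} with edges between points differing by 1 in exactly one coordinate, every cycle of length 6 is contained in a single unit cube of Z^3, i.e., its six vertices lie in a set of the form {a,a+1}×{b,b+1}×{c,c+1}. -/
abbrev LatPt : Type := {v : Fin 3 → ℤ // v 0 + v 1 + v 2 = 0 ∨ v 0 + v 1 + v 2 = 1}

def latGraph : SimpleGraph LatPt where
  Adj a b := ∃ i : Fin 3, |a.val i - b.val i| = 1 ∧ ∀ j : Fin 3, j ≠ i → a.val j = b.val j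
  symm := by
    refine ⟨?_⟩
    rintro a b ⟨i, h1, h2⟩
    exact ⟨i, by rwa [abs_sub_comm], fun j hj => (h2 j hj).symm⟩
  loopless := by
    refine ⟨?_⟩
    rintro a ⟨i, h1, -⟩
    simp at h1

/-! Moves out of the layer `sumv = 0` are `+eᵢ` and moves out of the layer `sumv = 1` are `-eᵢ`,
so the signs of the moves alternate along any walk, and two consecutive moves along the same axis
cancel. Index a 6-cycle by `ZMod 6`: it never returns to the vertex two steps back, so each
coordinate changes only at pairwise non-adjacent steps of the hexagon, with alternating signs and
total change zero. At most three non-adjacent steps fit in a hexagon and three would all have the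
same sign, so each coordinate changes either never or exactly twice, once up and once down. -/

namespace SimpleGraph.Walk

variable {V : Type*} {G : SimpleGraph V} {v : V} {n : ℕ} [NeZero n] {c : G.Walk v v}

theorem getVert_val_natCast (hn : c.length = n) {m : ℕ} (hm : m ≤ n) :
    c.getVert (m : ZMod n).val = c.getVert m := by
  rw [ZMod.val_natCast]
  rcases hm.lt_or_eq with hm | rfl
  · rw [Nat.mod_eq_of_lt hm]
  · rw [Nat.mod_self, getVert_zero, ← hn, getVert_length]

theorem adj_getVert_val_add_one (hn : c.length = n) (k : ZMod n) :
    G.Adj (c.getVert k.val) (c.getVert (k + 1).val) := by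
  have hk := k.val_lt
  have : k + 1 = ((k.val + 1 : ℕ) : ZMod n) := by push_cast [ZMod.natCast_zmod_val]; rfl
  rw [this, getVert_val_natCast hn hk]
  exact c.adj_getVert_succ (hn ▸ hk)

theorem IsCycle.injective_getVert_val (hc : c.IsCycle) (hn : c.length = n) :
    Function.Injective fun k : ZMod n => c.getVert k.val := fun k l h =>
  ZMod.val_injective n <| hc.getVert_injOn'
    (show k.val ≤ c.length - 1 by have := k.val_lt; omega)
    (show l.val ≤ c.length - 1 by have := l.val_lt; omega) h

end SimpleGraph.Walk

theorem exists_forall_eq_or_eq_add_one {ι : Type*} [Finite ι] [Nonempty ι] (x : ι → ℤ)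
    (h : ∀ k l, x k ≤ x l + 1) : ∃ w, ∀ k, x k = w ∨ x k = w + 1 := by
  obtain ⟨m, hm⟩ := Finite.exists_min x
  exact ⟨x m, fun k => by have := hm k; have := h k m; omega⟩

section AlternatingHexagon

variable (x s : ZMod 6 → ℤ)

theorem le_add_one_of_alternating (hs₁ : ∀ k, s k = 1 ∨ s k = -1)
    (hs : ∀ k, s (k + 1) = -s k) (hx : ∀ k, x (k + 1) = x k ∨ x (k + 1) = x k + s k)
    (hnb : ∀ k, x (k + 1) = x k ∨ x (k + 2) = x (k + 1)) (k : ZMod 6) :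
    x k ≤ x 0 + 1 := by
  have s0 := hs₁ 0
  have s1 : s 1 = -s 0 := hs 0
  have s2 : s 2 = -s 1 := hs 1
  have s3 : s 3 = -s 2 := hs 2
  have s4 : s 4 = -s 3 := hs 3
  have s5 : s 5 = -s 4 := hs 4
  have x0 : x 1 = x 0 ∨ x 1 = x 0 + s 0 := hx 0
  have x1 : x 2 = x 1 ∨ x 2 = x 1 + s 1 := hx 1
  have x2 : x 3 = x 2 ∨ x 3 = x 2 + s 2 := hx 2
  have x3 : x 4 = x 3 ∨ x 4 = x 3 + s 3 := hx 3
  have x4 : x 5 = x 4 ∨ x 5 = x 4 + s 4 := hx 4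
  have x5 : x 0 = x 5 ∨ x 0 = x 5 + s 5 := hx 5
  have n0 : x 1 = x 0 ∨ x 2 = x 1 := hnb 0
  have n1 : x 2 = x 1 ∨ x 3 = x 2 := hnb 1
  have n2 : x 3 = x 2 ∨ x 4 = x 3 := hnb 2
  have n3 : x 4 = x 3 ∨ x 5 = x 4 := hnb 3
  have n4 : x 5 = x 4 ∨ x 0 = x 5 := hnb 4
  have n5 : x 0 = x 5 ∨ x 1 = x 0 := hnb 5
  fin_cases k <;> dsimp <;> omega

theorem exists_eq_or_eq_add_one_of_alternating (hs₁ : ∀ k, s k = 1 ∨ s k = -1)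
    (hs : ∀ k, s (k + 1) = -s k) (hx : ∀ k, x (k + 1) = x k ∨ x (k + 1) = x k + s k)
    (hnb : ∀ k, x (k + 1) = x k ∨ x (k + 2) = x (k + 1)) :
    ∃ w, ∀ k, x k = w ∨ x k = w + 1 := by
  refine exists_forall_eq_or_eq_add_one x fun k l => ?_
  have := le_add_one_of_alternating (fun k => x (k + l)) (fun k => s (k + l))
    (fun k => hs₁ _) (fun k => by simpa only [add_right_comm] using hs (k + l))
    (fun k => by simpa only [add_right_comm] using hx (k + l))
    (fun k => by simpa only [add_right_comm] using hnb (k + l)) (k - l)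
  simpa using this

end AlternatingHexagon

theorem sumv_add_single (v : Fin 3 → ℤ) (i : Fin 3) (d : ℤ) :
    sumv (v + Pi.single i d) = sumv v + d := by
  fin_cases i <;> simp [sumv] <;> ring

namespace LatPt

def stepSign (a : LatPt) : ℤ := 1 - 2 * sumv a.val

theorem stepSign_eq_one_or_neg_one (a : LatPt) : a.stepSign = 1 ∨ a.stepSign = -1 := by
  rcases a.2 with h | h <;> simp [stepSign, sumv, h]

theorem exists_eq_add_single_of_adj {a b : LatPt} (h : latGraph.Adj a b) :
    ∃ i, b.val = a.val + Pi.single i a.stepSign := by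
  obtain ⟨i, hi, heq⟩ := h
  have hb : b.val = a.val + Pi.single i (b.val i - a.val i) := funext fun j => by
    rcases eq_or_ne j i with rfl | hj
    · simp
    · simp [hj, heq j hj]
  have hsum := sumv_add_single a.val i (b.val i - a.val i)
  rw [← hb] at hsum
  have hstep : b.val i - a.val i = a.stepSign := by
    have := (abs_eq zero_le_one).mp hi
    have := a.2
    have := b.2
    simp only [stepSign, sumv] at hsum ⊢
    omega
  exact ⟨i, hstep ▸ hb⟩

theorem stepSign_eq_neg_of_adj {a b : LatPt} (h : latGraph.Adj a b) :
    b.stepSign = -a.stepSign := by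
  obtain ⟨i, hi⟩ := exists_eq_add_single_of_adj h
  have := sumv_add_single a.val i a.stepSign
  rw [← hi] at this
  simp only [stepSign] at *
  omega

theorem eq_of_adj_of_adj_of_ne_of_ne {a b c : LatPt} (hab : latGraph.Adj a b)
    (hbc : latGraph.Adj b c) {j : Fin 3} (hj₁ : a.val j ≠ b.val j)
    (hj₂ : b.val j ≠ c.val j) : a = c := by
  obtain ⟨i, hi⟩ := exists_eq_add_single_of_adj hab
  obtain ⟨i', hi'⟩ := exists_eq_add_single_of_adj hbc
  obtain rfl : i = j := by
    by_contra h
    simp [hi, Ne.symm h] at hj₁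
  obtain rfl : i' = i := by
    by_contra h
    simp [hi', Ne.symm h] at hj₂
  apply Subtype.ext
  rw [hi', hi, stepSign_eq_neg_of_adj hab, add_assoc, ← Pi.single_add, add_neg_cancel,
    Pi.single_zero, add_zero]

end LatPt

theorem exists_unit_cube_of_nonbacktracking (u : ZMod 6 → LatPt)
    (hadj : ∀ k, latGraph.Adj (u k) (u (k + 1))) (hnb : ∀ k, u k ≠ u (k + 2)) :
    ∃ w : Fin 3 → ℤ, ∀ k i, (u k).val i = w i ∨ (u k).val i = w i + 1 := by
  choose w hw using fun i => exists_eq_or_eq_add_one_of_alternating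
    (fun k => (u k).val i) (fun k => (u k).stepSign)
    (fun k => (u k).stepSign_eq_one_or_neg_one)
    (fun k => LatPt.stepSign_eq_neg_of_adj (hadj k))
    (fun k => by
      obtain ⟨j, hj⟩ := LatPt.exists_eq_add_single_of_adj (hadj k)
      rcases eq_or_ne i j with rfl | hij
      · simp [hj]
      · simp [hj, hij])
    (fun k => by
      by_contra! h
      have hadj' : latGraph.Adj (u (k + 1)) (u (k + 2)) := by
        simpa [add_assoc, one_add_one_eq_two] using hadj (k + 1)
      exact hnb k (LatPt.eq_of_adj_of_adj_of_ne_of_ne (hadj k) hadj' h.1.symm h.2.symm))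
  exact ⟨w, fun k i => hw i k⟩

theorem six_cycles_lie_in_unit_cube (v : LatPt) (c : latGraph.Walk v v)
    (hc : c.IsCycle) (h6 : c.length = 6) :
    ∃ w : Fin 3 → ℤ, ∀ u ∈ c.support, ∀ i : Fin 3, u.val i = w i ∨ u.val i = w i + 1 := by
  obtain ⟨w, hw⟩ := exists_unit_cube_of_nonbacktracking (fun k => c.getVert k.val)
    (c.adj_getVert_val_add_one h6)
    (fun k h => absurd (left_eq_add.mp (hc.injective_getVert_val h6 h)) (by decide))
  refine ⟨w, fun u hu i => ?_⟩
  obtain ⟨m, rfl, hm⟩ := SimpleGraph.Walk.mem_support_iff_exists_getVert.mp hu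
  rw [← c.getVert_val_natCast h6 (h6 ▸ hm)]
  exact hw m i
end
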